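/- arXiv:1605.05036 — 4 statements merged into one kernel-verified Lean document; each statement's English description precedes it below -/
import Mathlib

section
/- Let S be an n×n Seidel matrix, i.e., a symmetric integer matrix with zero diagonal and all off-diagonal entries in {1, -1}. Then det(S) ≡ 1 - n (mod 4). -/
/-!
Write `S = (J - I) + 2N`, where `J - I` is the adjacency matrix of the complete graph and `N`
records the entries equal to `-1`. Adding `c` to both entries `(i, j)` and `(j, i)` of a
symmetric matrix `M` changes `det M` by `2c · adj(M)ᵢⱼ + c²d`, since `adj M` is again symmetric;
for `c = 2Nᵢⱼ` this is a multiple of `4`. Adding the pairs one at a time,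
`det S ≡ det (J - I) = (-1)ⁿ (1 - n) ≡ 1 - n (mod 4)`.
-/

open Matrix Finset

namespace Matrix

variable {n R : Type*} [DecidableEq n] [CommRing R]

theorem add_smul_single_add_single_eq_updateRow (M : Matrix n n R) {i j : n} (hij : i ≠ j)
    (c : R) :
    M + c • (single i j 1 + single j i 1) =
      (M.updateRow i (M i + c • Pi.single j 1)).updateRow j (M j + c • Pi.single i 1) := by
  ext a b
  simp only [add_apply, smul_apply, single_apply, updateRow_apply, Pi.add_apply, Pi.smul_apply,
    Pi.single_apply, smul_eq_mul]
  split_ifs <;> grind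

theorem isSymm_single_add_single (i j : n) : (single i j (1 : R) + single j i 1).IsSymm := by
  simp only [IsSymm, transpose_add, transpose_single, add_comm]

variable [Fintype n]

theorem det_updateRow_self_add_smul (A : Matrix n n R) (i : n) (c : R) (v : n → R) :
    (A.updateRow i (A i + c • v)).det = A.det + c * (A.updateRow i v).det := by
  rw [det_updateRow_add, det_updateRow_smul, updateRow_eq_self]

theorem IsSymm.det_add_smul_single_add_single {M : Matrix n n R} (hM : M.IsSymm) {i j : n}
    (hij : i ≠ j) (c : R) :
    ∃ d, (M + c • (single i j 1 + single j i 1)).det =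
      M.det + 2 * c * M.adjugate i j + c ^ 2 * d := by
  set A := M.updateRow i (M i + c • Pi.single j 1)
  set B := M.updateRow j (Pi.single i 1)
  have hAj : A j = M j := updateRow_ne hij.symm
  have hBi : B i = M i := updateRow_ne hij
  have hA : A.det = M.det + c * M.adjugate j i := by
    rw [det_updateRow_self_add_smul, adjugate_apply]
  have hAB : (A.updateRow j (Pi.single i 1)).det =
      M.adjugate i j + c * (B.updateRow i (Pi.single j 1)).det := by
    rw [updateRow_comm _ hij, ← hBi, det_updateRow_self_add_smul, adjugate_apply]
  refine ⟨(B.updateRow i (Pi.single j 1)).det, ?_⟩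
  rw [add_smul_single_add_single_eq_updateRow M hij, ← hAj, det_updateRow_self_add_smul, hA, hAB,
    hM.adjugate.apply j i]
  ring

theorem IsSymm.four_dvd_det_add_two_smul_sum_sub_det {M : Matrix n n R} (hM : M.IsSymm)
    {s : Finset (n × n)} (hs : ∀ p ∈ s, p.1 ≠ p.2) (a : n × n → R) :
    4 ∣ (M + (2 : R) • ∑ p ∈ s, a p • (single p.1 p.2 1 + single p.2 p.1 1)).det - M.det := by
  induction s using Finset.induction_on generalizing M with
  | empty => simp
  | insert p s hp ih =>
    set M' := M + (2 * a p) • (single p.1 p.2 1 + single p.2 p.1 1)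
    have hM' : M'.IsSymm := hM.add ((isSymm_single_add_single _ _).smul _)
    obtain ⟨d, hd⟩ := hM.det_add_smul_single_add_single (hs p (mem_insert_self p s)) (2 * a p)
    have hstep : 4 ∣ M'.det - M.det :=
      ⟨a p * M.adjugate p.1 p.2 + a p ^ 2 * d, by rw [hd]; ring⟩
    have hrest := ih hM' fun q hq => hs q (mem_insert_of_mem hq)
    rw [sum_insert hp, smul_add, smul_smul, ← add_assoc]
    simpa only [sub_add_sub_cancel] using dvd_add hrest hstep

theorem IsSymm.eq_sum_smul_single_add_single {N : Matrix n n R} (hN : N.IsSymm)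
    (hN0 : ∀ i, N i i = 0) {r : n → ℕ} (hr : Function.Injective r) :
    N = ∑ p ∈ univ.filter (fun p : n × n => r p.1 < r p.2),
      N p.1 p.2 • (single p.1 p.2 1 + single p.2 p.1 1) := by
  ext a b
  have hsingle : ∀ p : n × n, single p.1 p.2 (1 : R) a b = if p = (a, b) then 1 else 0 := by
    intro p; simp [single_apply, Prod.ext_iff]
  have hsingle' : ∀ p : n × n, single p.2 p.1 (1 : R) a b = if p = (b, a) then 1 else 0 := by
    intro p; simp [single_apply, Prod.ext_iff, and_comm]
  simp only [sum_apply, smul_apply, add_apply, hsingle, hsingle', smul_eq_mul, mul_add, mul_ite,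
    mul_one, mul_zero, sum_add_distrib, sum_ite_eq', mem_filter, mem_univ, true_and]
  rcases lt_trichotomy (r a) (r b) with h | h | h
  · simp [h, h.not_gt]
  · simp [hr h, hN0]
  · simp [h, h.not_gt, hN.apply a b]

theorem IsSymm.four_dvd_det_add_two_smul_sub_det {M N : Matrix n n R} (hM : M.IsSymm)
    (hN : N.IsSymm) (hN0 : ∀ i, N i i = 0) : 4 ∣ (M + (2 : R) • N).det - M.det := by
  rw [hN.eq_sum_smul_single_add_single hN0 (Fin.val_injective.comp (Fintype.equivFin n).injective)]
  exact hM.four_dvd_det_add_two_smul_sum_sub_det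
    (fun p hp h => (mem_filter.1 hp).2.ne (by rw [h])) _

end Matrix

theorem SimpleGraph.det_adjMatrix_top (n R : Type*) [Fintype n] [DecidableEq n] [CommRing R] :
    ((⊤ : SimpleGraph n).adjMatrix R).det = (-1) ^ Fintype.card n * (1 - Fintype.card n) := by
  have h : (⊤ : SimpleGraph n).adjMatrix R =
      -(1 + replicateCol Unit (fun _ => (-1 : R)) * replicateRow Unit (fun _ => (1 : R))) := by
    ext i j
    by_cases h : i = j <;> simp [h, one_apply, mul_apply, replicateCol, replicateRow]
  rw [h, det_neg, det_one_add_replicateCol_mul_replicateRow]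
  simp [dotProduct, sub_eq_add_neg]

theorem Int.neg_one_pow_mul_one_sub_modEq_four (n : ℕ) :
    (-1) ^ n * (1 - n : ℤ) ≡ 1 - n [ZMOD 4] := by
  rcases n.even_or_odd with he | ho
  · rw [he.neg_one_pow, one_mul]
  · rw [ho.neg_one_pow, neg_one_mul]
    obtain ⟨k, rfl⟩ := ho
    rw [Int.ModEq]
    push_cast
    omega

/-- The determinant of an `n×n` Seidel matrix (symmetric, zero diagonal, off-diagonal
entries ±1) is congruent to `1 - n` modulo 4. -/
theorem seidel_det_mod_four {n : ℕ} (S : Matrix (Fin n) (Fin n) ℤ)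
    (hsymm : S.IsSymm) (hdiag : ∀ i, S i i = 0)
    (hoff : ∀ i j, i ≠ j → S i j = 1 ∨ S i j = -1) :
    S.det % 4 = (1 - (n : ℤ)) % 4 := by
  set N : Matrix (Fin n) (Fin n) ℤ := .of fun i j => if S i j = -1 then -1 else 0
  have hN : N.IsSymm := by ext i j; simp [N, hsymm.apply i j]
  have hN0 : ∀ i, N i i = 0 := by simp [N, hdiag]
  have hS : S = (⊤ : SimpleGraph (Fin n)).adjMatrix ℤ + (2 : ℤ) • N := by
    ext i j
    rcases eq_or_ne i j with rfl | hij
    · simp [N, hdiag]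
    · rcases hoff i j hij with h | h <;> simp [N, h, hij]
  have hJ : ((⊤ : SimpleGraph (Fin n)).adjMatrix ℤ).IsSymm := SimpleGraph.isSymm_adjMatrix _
  have hdvd := hJ.four_dvd_det_add_two_smul_sub_det hN hN0
  rw [← hS, SimpleGraph.det_adjMatrix_top, Fintype.card_fin] at hdvd
  exact (Int.modEq_of_dvd hdvd).symm.trans (Int.neg_one_pow_mul_one_sub_modEq_four n)
end

section
/- Let P be an n×n Seidel matrix and D a diagonal matrix with entries in {1,-1}. With Q defined by Q(P)_{ii} = n-1 and Q(P)_{ij} = 1 + P_{ij}·Σ_{k≠i,j} P_{ik}P_{kj} for i≠j, one has Q(D·P·D) = Q(P). That is, Q is invariant under reversing the orientations of any subset of the lines. -/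
open Finset

/-- The matrix `Q(P)` derived from a Seidel matrix `P`: diagonal entries `n-1`, and
`Q(P)_{ij} = 1 + P_{ij} · Σ_{k ≠ i,j} P_{ik} P_{kj}` off the diagonal. -/
def seidelQ {n : ℕ} (P : Matrix (Fin n) (Fin n) ℤ) : Matrix (Fin n) (Fin n) ℤ :=
  Matrix.of fun i j =>
    if i = j then (n : ℤ) - 1
    else 1 + P i j * ∑ k ∈ univ.filter (fun k => k ≠ i ∧ k ≠ j), P i k * P k j

/-- `Q` is invariant under switching: `Q(D·P·D) = Q(P)` for any ±1 diagonal matrix `D`. -/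
theorem seidelQ_switching_invariant {n : ℕ} (P : Matrix (Fin n) (Fin n) ℤ)
    (hsymm : P.IsSymm) (hdiag : ∀ i, P i i = 0)
    (hoff : ∀ i j, i ≠ j → P i j = 1 ∨ P i j = -1)
    (d : Fin n → ℤ) (hd : ∀ i, d i = 1 ∨ d i = -1) :
    seidelQ (Matrix.diagonal d * P * Matrix.diagonal d) = seidelQ P := by
  have hsq : ∀ i, d i * d i = 1 := by
    intro i; rcases hd i with h | h <;> simp [h]
  have hentry : ∀ i j, (Matrix.diagonal d * P * Matrix.diagonal d) i j = d i * P i j * d j := by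
    intro i j
    rw [Matrix.mul_diagonal, Matrix.diagonal_mul]
  ext i j
  simp only [seidelQ, Matrix.of_apply]
  split
  · rfl
  · congr 1
    simp only [hentry]
    rw [Finset.mul_sum, Finset.mul_sum]
    apply Finset.sum_congr rfl
    intro k _
    rcases hd i with hi | hi <;> rcases hd j with hj | hj <;> rcases hd k with hk | hk <;>
      rw [hi, hj, hk] <;> ring
end

section
/- Let S be an n×n Seidel matrix (n ≥ 2) and suppose rows i ≠ j are in 'equal environment': there exists ε ∈ {1,-1} such that S_{ik} = ε·S_{jk} for all k ∉ {i, j}. Then S has an eigenvalue equal to 1 or -1; specifically, the vector e_i - ε·e_j is an eigenvector of S with eigenvalue -ε·S_{ij} ∈ {1, -1}. -/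
/-- If two rows of a Seidel matrix are in "equal environment" (agree up to an overall
sign `ε` off the diagonal), then `e_i - ε·e_j` is an eigenvector of `S` with eigenvalue
`-ε·S_{ij} ∈ {1, -1}`. -/
theorem seidel_equalEnvironment_eigen {n : ℕ} (hn : 2 ≤ n)
    (S : Matrix (Fin n) (Fin n) ℝ)
    (hsymm : S.IsSymm) (hdiag : ∀ i, S i i = 0)
    (hoff : ∀ i j, i ≠ j → S i j = 1 ∨ S i j = -1)
    (i j : Fin n) (hij : i ≠ j) (ε : ℝ) (hε : ε = 1 ∨ ε = -1)
    (hEE : ∀ k, k ≠ i → k ≠ j → S i k = ε * S j k) :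
    let v : Fin n → ℝ := Pi.single i (1 : ℝ) - ε • (Pi.single j (1 : ℝ) : Fin n → ℝ)
    S.mulVec v = (-ε * S i j) • v ∧ v ≠ 0 ∧
      (-ε * S i j = 1 ∨ -ε * S i j = -1) := by
  intro v
  have hsym : ∀ a b, S a b = S b a := fun a b => hsymm.apply b a
  have hv : ∀ k, v k = (if k = i then 1 else 0) - ε * (if k = j then 1 else 0) := by
    intro k
    simp [v, Pi.single_apply]
  have hmv : ∀ k, S.mulVec v k = S k i - ε * S k j := by
    intro k
    simp only [Matrix.mulVec, dotProduct]
    have : ∀ x, S k x * v x =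
        (if x = i then S k i else 0) - ε * (if x = j then S k j else 0) := by
      intro x
      rw [hv x]
      by_cases hxi : x = i <;> by_cases hxj : x = j <;>
        simp [hxi, hxj, hij, hij.symm] <;> ring
    simp only [this]
    rw [Finset.sum_sub_distrib, ← Finset.mul_sum]
    simp
  refine ⟨?_, ?_, ?_⟩
  · funext k
    rw [hmv k, Pi.smul_apply, hv k, smul_eq_mul]
    by_cases hki : k = i
    · subst hki
      rw [if_pos rfl, if_neg hij, hdiag k]
      ring
    · by_cases hkj : k = j
      · subst hkj
        rw [if_neg hij.symm, if_pos rfl, hdiag k, hsym k i]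
        rcases hε with h | h <;> rw [h] <;> ring
      · have := hEE k hki hkj
        rw [hsym k i, hsym k j, this]
        simp [hki, hkj]
  · intro h
    have := congrFun h i
    rw [hv i] at this
    simp [hij] at this
  · rcases hoff i j hij with h | h <;> rw [h] <;> rcases hε with h' | h' <;> subst h' <;> norm_num
end

section
/- Let S be a 5×5 Seidel matrix. If |det S| = 4, then S² has constant diagonal equal to 4, i.e., every row of S, viewed as a vector in ℝ⁵, has squared norm 4, and moreover det(S) = 4 implies S is switching-equivalent to J - I: there exist a diagonal matrix D with entries in {1,-1} and a permutation matrix Pσ such that S = D·Pσ·(J - I)·Pσᵀ·D. -/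
open Matrix

/-!
Switching by `D = diagonal d` with `d i = ±1` preserves the Seidel property and the determinant,
and `D * D = 1`. Choosing `d i = S 0 i` (and `d 0 = 1`) switches row and column `0` of `S` to
all ones, so `D S D` is determined by the six entries above the diagonal of its lower-right
`4 × 4` block. The determinant is then a cubic polynomial in these six signs, and checking the
`64` sign patterns shows that it equals `4` only when all of them are `1`, i.e. `D S D = J - I`.
-/

section Switching

variable {n R : Type*} [Fintype n] [DecidableEq n]

lemma Matrix.diagonal_mul_self_of_mul_self_eq_one [Semiring R] {d : n → R}
    (hd : ∀ i, d i * d i = 1) : diagonal d * diagonal d = 1 := by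
  rw [diagonal_mul_diagonal, ← diagonal_one]
  exact congrArg diagonal (funext hd)

lemma Matrix.diagonal_mul_diagonal_mul_mul_diagonal_mul_diagonal [Semiring R] {d : n → R}
    (hd : ∀ i, d i * d i = 1) (S : Matrix n n R) :
    diagonal d * (diagonal d * S * diagonal d) * diagonal d = S := by
  simp only [← Matrix.mul_assoc, diagonal_mul_self_of_mul_self_eq_one hd, Matrix.one_mul]
  rw [Matrix.mul_assoc, diagonal_mul_self_of_mul_self_eq_one hd, Matrix.mul_one]

lemma Matrix.det_diagonal_mul_mul_diagonal [CommRing R] {d : n → R}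
    (hd : ∀ i, d i * d i = 1) (S : Matrix n n R) :
    (diagonal d * S * diagonal d).det = S.det := by
  rw [det_mul, det_mul, det_diagonal, mul_right_comm, ← Finset.prod_mul_distrib,
    Finset.prod_eq_one fun i _ => hd i, one_mul]

end Switching

structure IsSeidel {n : Type*} (S : Matrix n n ℤ) : Prop where
  symm : S.IsSymm
  diag : ∀ i, S i i = 0
  off_diag : ∀ i j, i ≠ j → S i j = 1 ∨ S i j = -1

namespace IsSeidel

variable {n : Type*} {S : Matrix n n ℤ}

lemma apply_comm (hS : IsSeidel S) (i j : n) : S j i = S i j := by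
  simpa using congrFun (congrFun hS.symm i) j

lemma mul_self_of_ne (hS : IsSeidel S) {i j : n} (h : i ≠ j) : S i j * S i j = 1 :=
  Int.isUnit_mul_self (Int.isUnit_iff.mpr (hS.off_diag i j h))

variable [Fintype n] [DecidableEq n]

lemma mul_self_apply_self (hS : IsSeidel S) (i : n) :
    (S * S) i i = Fintype.card n - 1 := by
  have h : ∀ j, S i j * S j i = 1 - if j = i then 1 else 0 := by
    intro j
    split_ifs with hji
    · simp [hji, hS.diag]
    · rw [hS.apply_comm i j, hS.mul_self_of_ne (Ne.symm hji), sub_zero]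
  simp [mul_apply, h, Finset.sum_sub_distrib]

lemma switch (hS : IsSeidel S) {d : n → ℤ} (hd : ∀ i, d i = 1 ∨ d i = -1) :
    IsSeidel (diagonal d * S * diagonal d) where
  symm := by
    simp only [IsSymm, transpose_mul, diagonal_transpose, hS.symm.eq, Matrix.mul_assoc]
  diag i := by simp [hS.diag]
  off_diag i j h := by
    simp only [mul_diagonal, diagonal_mul]
    rcases hd i with hi | hi <;> rcases hd j with hj | hj <;>
      rcases hS.off_diag i j h with hij | hij <;> simp [hi, hj, hij]

lemma exists_switch_row_eq_one (hS : IsSeidel S) (i₀ : n) :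
    ∃ d : n → ℤ, (∀ i, d i = 1 ∨ d i = -1) ∧
      ∀ j, j ≠ i₀ → (diagonal d * S * diagonal d) i₀ j = 1 := by
  refine ⟨fun i => if i = i₀ then 1 else S i₀ i, fun i => ?_, fun j hj => ?_⟩
  · dsimp only
    split_ifs with hi
    · exact Or.inl rfl
    · exact hS.off_diag i₀ i (Ne.symm hi)
  · simp [mul_diagonal, diagonal_mul, hj, hS.mul_self_of_ne (Ne.symm hj)]

end IsSeidel

lemma det_fin_five_bordered (a b c e f g : ℤ) :
    det !![0, 1, 1, 1, 1; 1, 0, a, b, c; 1, a, 0, e, f; 1, b, e, 0, g; 1, c, f, g, 0] =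
      -2*e*f*g + 2*c*e*g + 2*c*e*f - 2*c*e*e - 2*c*c*e + 2*b*f*g - 2*b*f*f
      + 2*b*e*f - 2*b*c*g + 2*b*c*f + 2*b*c*e - 2*b*b*f - 2*a*g*g + 2*a*f*g
      + 2*a*e*g + 2*a*c*g - 2*a*c*f + 2*a*c*e + 2*a*b*g + 2*a*b*f - 2*a*b*e
      - 2*a*a*g := by
  simp [det_succ_row_zero, Fin.sum_univ_succ, Fin.succAbove]
  ring

lemma IsSeidel.eq_bordered_of_row_zero_eq_one {T : Matrix (Fin 5) (Fin 5) ℤ} (hT : IsSeidel T)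
    (h0 : ∀ j, j ≠ 0 → T 0 j = 1) :
    T = !![0, 1, 1, 1, 1;
           1, 0, T 1 2, T 1 3, T 1 4;
           1, T 1 2, 0, T 2 3, T 2 4;
           1, T 1 3, T 2 3, 0, T 3 4;
           1, T 1 4, T 2 4, T 3 4, 0] := by
  ext i j
  fin_cases i <;> fin_cases j <;> simp [hT.diag, h0, hT.apply_comm 0] <;>
    exact hT.apply_comm _ _

lemma eq_one_of_det_bordered_eq_four {a b c e f g : ℤ}
    (ha : a = 1 ∨ a = -1) (hb : b = 1 ∨ b = -1) (hc : c = 1 ∨ c = -1)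
    (he : e = 1 ∨ e = -1) (hf : f = 1 ∨ f = -1) (hg : g = 1 ∨ g = -1)
    (h : det !![0, 1, 1, 1, 1; 1, 0, a, b, c; 1, a, 0, e, f; 1, b, e, 0, g; 1, c, f, g, 0] = 4) :
    a = 1 ∧ b = 1 ∧ c = 1 ∧ e = 1 ∧ f = 1 ∧ g = 1 := by
  rw [det_fin_five_bordered] at h
  rcases ha with rfl | rfl <;> rcases hb with rfl | rfl <;> rcases hc with rfl | rfl <;>
    rcases he with rfl | rfl <;> rcases hf with rfl | rfl <;> rcases hg with rfl | rfl <;>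
    revert h <;> norm_num

lemma IsSeidel.eq_of_row_zero_eq_one_of_det_eq_four {T : Matrix (Fin 5) (Fin 5) ℤ}
    (hT : IsSeidel T) (h0 : ∀ j, j ≠ 0 → T 0 j = 1) (hdet : T.det = 4) :
    T = of (fun _ _ => 1) - 1 := by
  rw [hT.eq_bordered_of_row_zero_eq_one h0] at hdet ⊢
  obtain ⟨h12, h13, h14, h23, h24, h34⟩ := eq_one_of_det_bordered_eq_four
    (hT.off_diag 1 2 (by decide)) (hT.off_diag 1 3 (by decide)) (hT.off_diag 1 4 (by decide))
    (hT.off_diag 2 3 (by decide)) (hT.off_diag 2 4 (by decide)) (hT.off_diag 3 4 (by decide))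
    hdet
  rw [h12, h13, h14, h23, h24, h34]
  decide

/-- For a 5×5 Seidel matrix `S`: if `|det S| = 4` then every diagonal entry of `S²`
equals 4 (each row has squared norm 4); and if `det S = 4` then `S` is
switching-equivalent to `K5 = J - I`. -/
theorem seidel_five_det_four (S : Matrix (Fin 5) (Fin 5) ℤ)
    (hsymm : S.IsSymm) (hdiag : ∀ i, S i i = 0)
    (hoff : ∀ i j, i ≠ j → S i j = 1 ∨ S i j = -1) :
    (|S.det| = 4 → ∀ i, (S * S) i i = 4) ∧
    (S.det = 4 →
      ∃ (d : Fin 5 → ℤ) (σ : Equiv.Perm (Fin 5)),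
        (∀ i, d i = 1 ∨ d i = -1) ∧
        S = Matrix.diagonal d * σ.permMatrix ℤ
              * ((Matrix.of fun _ _ => (1 : ℤ)) - 1)
              * (σ.permMatrix ℤ)ᵀ * Matrix.diagonal d) := by
  have hS : IsSeidel S := ⟨hsymm, hdiag, hoff⟩
  refine ⟨fun _ i => by simp [hS.mul_self_apply_self i], fun hdet => ?_⟩
  obtain ⟨d, hd, hrow⟩ := hS.exists_switch_row_eq_one 0
  have hd_sq : ∀ i, d i * d i = 1 := fun i => Int.isUnit_mul_self (Int.isUnit_iff.mpr (hd i))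
  have hK := (hS.switch hd).eq_of_row_zero_eq_one_of_det_eq_four hrow
    (by rw [det_diagonal_mul_mul_diagonal hd_sq, hdet])
  refine ⟨d, 1, hd, ?_⟩
  rw [permMatrix_one, transpose_one, Matrix.mul_one, Matrix.mul_one, ← hK,
    diagonal_mul_diagonal_mul_mul_diagonal_mul_diagonal hd_sq]
end
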